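/- arXiv:0806.2696 — 4 statements merged into one kernel-verified Lean document; each statement's English description precedes it below -/
import Mathlib

section
/- Let V be a 3-dimensional complex vector space, g a nondegenerate symmetric bilinear form on V, and q a quadratic form on V. If q(ξ) = 0 for every null vector ξ (i.e., every ξ ∈ V with g(ξ,ξ) = 0), then there exists a constant c ∈ ℂ such that q(ξ) = c·g(ξ,ξ) for all ξ ∈ V. -/
/-!
Over an algebraically closed field `g` has an orthonormal basis `wᵢ`. For `i ≠ j` the vectors
`wᵢ ± √-1 • wⱼ` are null, so `q(wᵢ) - q(wⱼ) ± √-1 • polar q (wᵢ, wⱼ) = 0`: the polar form of `q`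
vanishes off the diagonal and `q` takes one value `c` on the basis. Hence
`polar q = 2c • g` on the basis, so everywhere.
-/

open Module QuadraticMap

section

variable {K V : Type*} [Field K] [AddCommGroup V] [Module K V]

theorem LinearMap.BilinForm.exists_orthonormal_basis [IsAlgClosed K] [Invertible (2 : K)]
    [FiniteDimensional K V] {g : V →ₗ[K] V →ₗ[K] K} (hsymm : g.IsSymm) (hg : g.SeparatingLeft) :
    ∃ w : Basis (Fin (finrank K V)) K V, g.IsOrthoᵢ w ∧ ∀ i, g (w i) (w i) = 1 := by
  obtain ⟨v, hv⟩ := exists_orthogonal_basis hsymm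
  have hvv : ∀ i, g (v i) (v i) ≠ 0 := hv.not_isOrtho_basis_self_of_separatingLeft hg
  choose s hs using fun i => IsAlgClosed.exists_eq_mul_self (g (v i) (v i))⁻¹
  have hs₀ : ∀ i, s i ≠ 0 := fun i h => by simpa [h, hvv i] using hs i
  refine ⟨v.unitsSMul fun i => Units.mk0 (s i) (hs₀ i), fun i j hij => ?_, fun i => ?_⟩
  · simp [Function.onFun, Basis.unitsSMul_apply, show g (v i) (v j) = 0 from hv hij]
  · simp only [Basis.unitsSMul_apply, Units.smul_mk0, map_smul, LinearMap.smul_apply,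
      smul_eq_mul]
    rw [← mul_assoc, ← hs i, inv_mul_cancel₀ (hvv i)]

theorem QuadraticMap.map_add_smul {R M : Type*} [CommRing R] [AddCommGroup M] [Module R M]
    (q : QuadraticForm R M) (x y : M) (t : R) :
    q (x + t • y) = q x + t * t * q y + t * polar q x y := by
  rw [QuadraticMap.map_add (⇑q), QuadraticMap.map_smul, polar_smul_right, smul_eq_mul, smul_eq_mul]

theorem QuadraticMap.polar_eq_zero_and_eq_of_vanishing_on_null_cone [Invertible (2 : K)]
    {g : V →ₗ[K] V →ₗ[K] K} {q : QuadraticForm K V} (hq : ∀ ξ, g ξ ξ = 0 → q ξ = 0)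
    {i : K} (hi : i * i = -1) {x y : V} (hx : g x x = 1) (hy : g y y = 1) (hxy : g x y = 0)
    (hyx : g y x = 0) : polar q x y = 0 ∧ q x = q y := by
  have hnull : ∀ t : K, t * t = -1 → q x - q y + t * polar q x y = 0 := fun t ht => by
    have h := hq (x + t • y) (by simp [hx, hy, hxy, hyx, ht])
    rwa [map_add_smul, ht, neg_one_mul, ← sub_eq_add_neg] at h
  have hplus := hnull i hi
  have hminus := hnull (-i) (by rwa [neg_mul_neg])
  have hi₀ : i ≠ 0 := by rintro rfl; simp at hi
  have hpolar : 2 * i * polar q x y = 0 := by linear_combination hplus - hminus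
  have hpolar₀ : polar q x y = 0 := by simpa [hi₀, two_ne_zero] using hpolar
  refine ⟨hpolar₀, ?_⟩
  linear_combination hplus - i * hpolar₀

theorem QuadraticMap.exists_eq_mul_of_orthonormal_basis [Invertible (2 : K)] {ι : Type*}
    {g : V →ₗ[K] V →ₗ[K] K} (w : Basis ι K V) (hortho : g.IsOrthoᵢ w)
    (hnorm : ∀ i, g (w i) (w i) = 1) {q : QuadraticForm K V}
    (hpolar : ∀ i j, i ≠ j → polar q (w i) (w j) = 0)
    (hconst : ∀ i j, i ≠ j → q (w i) = q (w j)) :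
    ∃ c : K, ∀ ξ, q ξ = c * g ξ ξ := by
  obtain ⟨c, hc⟩ : ∃ c, ∀ i, q (w i) = c := by
    rcases isEmpty_or_nonempty ι with _ | ⟨⟨i₀⟩⟩
    · exact ⟨0, isEmptyElim⟩
    · refine ⟨q (w i₀), fun i => ?_⟩
      obtain rfl | hi := eq_or_ne i i₀
      exacts [rfl, hconst i i₀ hi]
  have hpolarBilin : polarBilin q = (2 * c) • g := by
    refine LinearMap.ext_basis w w fun i j => ?_
    obtain rfl | hij := eq_or_ne i j
    · simp [polar_self, hc, hnorm]
    · simp [hpolar i j hij, show g (w i) (w j) = 0 from hortho hij]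
  refine ⟨c, fun ξ => ?_⟩
  have h := congr($hpolarBilin ξ ξ)
  simp only [polarBilin_apply_apply, polar_self, nsmul_eq_mul, Nat.cast_ofNat,
    LinearMap.smul_apply, smul_eq_mul] at h
  rw [mul_assoc] at h
  exact mul_left_cancel₀ (Invertible.ne_zero 2) h

end

theorem quadratic_form_vanishing_on_null_cone_is_multiple_of_metric_general
    (V : Type*) [AddCommGroup V] [Module ℂ V] [FiniteDimensional ℂ V]
    (g : V →ₗ[ℂ] V →ₗ[ℂ] ℂ)
    (hsymm : ∀ x y : V, g x y = g y x)
    (hnondeg : ∀ x : V, (∀ y : V, g x y = 0) → x = 0)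
    (q : QuadraticForm ℂ V)
    (hq : ∀ ξ : V, g ξ ξ = 0 → q ξ = 0) :
    ∃ c : ℂ, ∀ ξ : V, q ξ = c * g ξ ξ := by
  have : Invertible (2 : ℂ) := invertibleOfNonzero two_ne_zero
  obtain ⟨w, hortho, hnorm⟩ :=
    LinearMap.BilinForm.exists_orthonormal_basis (g := g) ⟨hsymm⟩ hnondeg
  have hnull {i j} (hij : i ≠ j) :=
    polar_eq_zero_and_eq_of_vanishing_on_null_cone hq Complex.I_mul_I (hnorm i) (hnorm j)
      (hortho hij) (hortho hij.symm)
  exact exists_eq_mul_of_orthonormal_basis w hortho hnorm (fun i j hij => (hnull hij).1)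
    fun i j hij => (hnull hij).2

/-- A quadratic form on a 3-dimensional complex vector space that vanishes
on the null cone of a nondegenerate symmetric bilinear form `g` is a constant multiple
of `g(ξ,ξ)`. -/
theorem quadratic_form_vanishing_on_null_cone_is_multiple_of_metric
    (V : Type*) [AddCommGroup V] [Module ℂ V] [FiniteDimensional ℂ V]
    (hdim : Module.finrank ℂ V = 3)
    (g : V →ₗ[ℂ] V →ₗ[ℂ] ℂ)
    (hsymm : ∀ x y : V, g x y = g y x)
    (hnondeg : ∀ x : V, (∀ y : V, g x y = 0) → x = 0)
    (q : QuadraticForm ℂ V)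
    (hq : ∀ ξ : V, g ξ ξ = 0 → q ξ = 0) :
    ∃ c : ℂ, ∀ ξ : V, q ξ = c * g ξ ξ :=
  quadratic_form_vanishing_on_null_cone_is_multiple_of_metric_general V g hsymm hnondeg q hq
end

section
/- Let π : ℂ → ℝ³ be given by π(w) = ( 2·Re w/(1+|w|²), 2·Im w/(1+|w|²), (1−|w|²)/(1+|w|²) ). Let λ ∈ ℂ and z ∈ ℂ with |z| ≤ 1, 1 − conj(λ)·z ≠ 0, conj(λ)·z + 1 ≠ 0 and z ≠ λ. Set η₁ = (z + λ)/(1 − conj(λ)·z) and η₂ = (z − λ)/(conj(λ)·z + 1), and let S = π(η₁) + π(1/conj(η₂)) ∈ ℝ³. Then 2(Re λ)·S₁ + 2(Im λ)·S₂ + (1 − |λ|²)·S₃ = 0. (This is the key computation showing that for each point (η₁,η₂) of the standard disk D_{(λ,0)}, the great circle associated with λ is the set of points of S² equidistant from π(η₁) and π(τ(η₂)).) -/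
/-!
The left-hand side is the linear form `⟨(1 + |λ|²) π(λ), ·⟩` evaluated at `S`. On a point
`π(a / b)` this form equals `(|conj λ · a + b|² - |a - λ b|²) / (|a|² + |b|²)`. Writing
`η₁ = (z + λ) / (1 - conj λ · z)` and `τ(η₂) = conj (conj λ · z + 1) / conj (z - λ)`, both
denominators become `(1 + |λ|²)(1 + |z|²)`, while the numerators are
`±(1 + |λ|²)² (1 - |z|²)`, so the two contributions cancel.
-/

/-- The inverse stereographic projection ℂ → S² ⊂ ℝ³. -/
noncomputable def stereo (w : ℂ) : Fin 3 → ℝ :=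
  ![2 * w.re / (1 + Complex.normSq w),
    2 * w.im / (1 + Complex.normSq w),
    (1 - Complex.normSq w) / (1 + Complex.normSq w)]

open Complex ComplexConjugate

def greatCircleForm (lam : ℂ) (v : Fin 3 → ℝ) : ℝ :=
  2 * lam.re * v 0 + 2 * lam.im * v 1 + (1 - normSq lam) * v 2

theorem greatCircleForm_add (lam : ℂ) (v w : Fin 3 → ℝ) :
    greatCircleForm lam (v + w) = greatCircleForm lam v + greatCircleForm lam w := by
  simp only [greatCircleForm, Pi.add_apply]
  ring

theorem greatCircleForm_stereo (lam w : ℂ) :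
    greatCircleForm lam (stereo w) =
      (normSq (conj lam * w + 1) - normSq (w - lam)) / (1 + normSq w) := by
  simp only [greatCircleForm, stereo, Matrix.cons_val_zero, Matrix.cons_val_one,
    Matrix.cons_val_two, Matrix.head_cons, Matrix.tail_cons]
  simp only [normSq_apply, add_re, add_im, sub_re, sub_im, mul_re, mul_im, conj_re, conj_im,
    one_re, one_im]
  ring

theorem greatCircleForm_stereo_div (lam a b : ℂ) (hb : b ≠ 0) :
    greatCircleForm lam (stereo (a / b)) =
      (normSq (conj lam * a + b) - normSq (a - lam * b)) / (normSq a + normSq b) := by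
  have h₁ : conj lam * a + b = b * (conj lam * (a / b) + 1) := by field_simp
  have h₂ : a - lam * b = b * (a / b - lam) := by field_simp
  have h₃ : a = b * (a / b) := by field_simp
  have h₄ : normSq b ≠ 0 := normSq_eq_zero.not.2 hb
  rw [greatCircleForm_stereo, h₁, h₂, h₃, mul_div_cancel_left₀ _ hb, normSq_mul, normSq_mul,
    normSq_mul, ← mul_sub, show normSq b * normSq (a / b) + normSq b =
      normSq b * (1 + normSq (a / b)) by ring, mul_div_mul_left _ _ h₄]

theorem normSq_add_normSq_ne_zero (a : ℂ) {b : ℂ} (hb : b ≠ 0) : normSq a + normSq b ≠ 0 :=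
  (add_pos_of_nonneg_of_pos (normSq_nonneg a) (normSq_pos.2 hb)).ne'

theorem one_add_normSq_ne_zero (w : ℂ) : 1 + normSq w ≠ 0 :=
  (add_pos_of_pos_of_nonneg one_pos (normSq_nonneg w)).ne'

theorem greatCircleForm_stereo_disk_fst (lam z : ℂ) (h : 1 - conj lam * z ≠ 0) :
    greatCircleForm lam (stereo ((z + lam) / (1 - conj lam * z))) =
      (1 + normSq lam) * (1 - normSq z) / (1 + normSq z) := by
  rw [greatCircleForm_stereo_div _ _ _ h,
    div_eq_div_iff (normSq_add_normSq_ne_zero _ h) (one_add_normSq_ne_zero z)]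
  simp only [normSq_apply, add_re, add_im, sub_re, sub_im, mul_re, mul_im, conj_re, conj_im,
    one_re, one_im]
  ring

theorem greatCircleForm_stereo_disk_snd (lam z : ℂ) (h : z ≠ lam) :
    greatCircleForm lam (stereo (1 / conj ((z - lam) / (conj lam * z + 1)))) =
      -((1 + normSq lam) * (1 - normSq z) / (1 + normSq z)) := by
  have h' : conj (z - lam) ≠ 0 := (map_ne_zero _).2 (sub_ne_zero.2 h)
  rw [map_div₀, one_div, inv_div, greatCircleForm_stereo_div _ _ _ h', ← neg_div,
    div_eq_div_iff (normSq_add_normSq_ne_zero _ h') (one_add_normSq_ne_zero z)]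
  simp only [normSq_apply, add_re, add_im, sub_re, sub_im, mul_re, mul_im, conj_re, conj_im,
    one_re, one_im]
  ring

theorem great_circle_equidistant_general
    (lam z : ℂ)
    (h1 : 1 - (starRingEnd ℂ) lam * z ≠ 0)
    (h3 : z ≠ lam) :
    let η₁ := (z + lam) / (1 - (starRingEnd ℂ) lam * z)
    let η₂ := (z - lam) / ((starRingEnd ℂ) lam * z + 1)
    let S := stereo η₁ + stereo (1 / (starRingEnd ℂ) η₂)
    2 * lam.re * S 0 + 2 * lam.im * S 1 + (1 - Complex.normSq lam) * S 2 = 0 := by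
  change greatCircleForm lam (stereo _ + stereo _) = 0
  rw [greatCircleForm_add, greatCircleForm_stereo_disk_fst lam z h1,
    greatCircleForm_stereo_disk_snd lam z h3, add_neg_cancel]

/-- For any point `(η₁, η₂)` of the standard disk `D_{(λ,0)}`, the sum
`S = π(η₁) + π(1/conj(η₂))` lies on the plane `2(Re λ)x₁ + 2(Im λ)x₂ + (1−|λ|²)x₃ = 0`:
the great circle of `λ` consists of points equidistant from `π(η₁)` and `π(τ(η₂))`. -/
theorem great_circle_equidistant
    (lam z : ℂ) (hz : ‖z‖ ≤ 1)
    (h1 : 1 - (starRingEnd ℂ) lam * z ≠ 0)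
    (h2 : (starRingEnd ℂ) lam * z + 1 ≠ 0)
    (h3 : z ≠ lam) :
    let η₁ := (z + lam) / (1 - (starRingEnd ℂ) lam * z)
    let η₂ := (z - lam) / ((starRingEnd ℂ) lam * z + 1)
    let S := stereo η₁ + stereo (1 / (starRingEnd ℂ) η₂)
    2 * lam.re * S 0 + 2 * lam.im * S 1 + (1 - Complex.normSq lam) * S 2 = 0 :=
  great_circle_equidistant_general lam z h1 h3
end

section
/- For every pair of distinct points p, q ∈ ℂ, the set 𝔠_{p,q} = {(A,B,C) ∈ ℝ×ℂ×ℝ : |B|² − AC = 1, A|p|² − B·conj(p) − conj(B)·p + C = 0, and A|q|² − B·conj(q) − conj(B)·q + C = 0} is homeomorphic to the circle S¹ = {z ∈ ℂ : |z| = 1}. (In the standard model, 𝔠_{p,q} is the space-like geodesic of oriented circles through the two points p and q, and it is closed.) -/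
/-!
The pencil of oriented circles through `p` and `q` is the intersection of the quadric
`|B|² − AC = 1` with a real plane (the two circle equations are real-linear in `(A, B, C)`).
On that plane the form `|B|² − AC` is positive definite: in the explicit basis given by the
circle with diameter `[p, q]` and the line through `p` and `q`, suitably normalised, it becomes
`|z|²`. The coordinate map is therefore a linear embedding of `ℂ` onto the plane carrying the
unit circle onto the set in question.
-/

open Complex ComplexConjugate Set Topology

def circleForm (x : ℝ × ℂ × ℝ) : ℝ := normSq x.2.1 - x.1 * x.2.2

def circleEqn (x : ℝ × ℂ × ℝ) (w : ℂ) : ℂ :=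
  (x.1 : ℂ) * (normSq w : ℝ) - x.2.1 * conj w - conj x.2.1 * w + (x.2.2 : ℂ)

def circlesThrough (p q : ℂ) : Set (ℝ × ℂ × ℝ) :=
  {x | circleForm x = 1 ∧ circleEqn x p = 0 ∧ circleEqn x q = 0}

theorem circleEqn_eq_ofReal (x : ℝ × ℂ × ℝ) (w : ℂ) :
    circleEqn x w = ((x.1 * normSq w - 2 * (x.2.1 * conj w).re + x.2.2 : ℝ) : ℂ) := by
  apply Complex.ext <;>
    simp only [circleEqn, normSq_apply, add_re, add_im, sub_re, sub_im, mul_re, mul_im,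
      ofReal_re, ofReal_im, conj_re, conj_im] <;>
    ring

noncomputable section

/-- `z = 1` gives the circle with diameter `[p, q]` and `z = I` the line through `p` and `q`,
both scaled by `1 / ‖p - q‖` so that `circleForm` takes the value `1` on them. -/
def pencilCircle (p q z : ℂ) : ℝ × ℂ × ℝ :=
  (2 * z.re / ‖p - q‖,
   ((z.re / ‖p - q‖ : ℝ) : ℂ) * (p + q) + ((z.im / ‖p - q‖ : ℝ) : ℂ) * I * (p - q),
   (2 * z.re * (p * conj q).re + 2 * z.im * (conj p * q).im) / ‖p - q‖)

def pencilCoord (p q : ℂ) (x : ℝ × ℂ × ℝ) : ℂ :=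
  (((x.2.1 * (conj p + conj q)).re - x.1 * (p * conj q).re - x.2.2) / ‖p - q‖ : ℝ)
    + (((x.2.1 * (conj p - conj q)).im - x.1 * (conj p * q).im) / ‖p - q‖ : ℝ) * I

end

theorem sq_norm_sub_eq (p q : ℂ) : ‖p - q‖ ^ 2 = (p.re - q.re) ^ 2 + (p.im - q.im) ^ 2 := by
  rw [Complex.sq_norm, normSq_apply, sub_re, sub_im]
  ring

section Pencil

variable {p q : ℂ}

theorem circleEqn_pencilCircle_left (z : ℂ) : circleEqn (pencilCircle p q z) p = 0 := by
  rw [circleEqn_eq_ofReal, ofReal_eq_zero]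
  simp only [pencilCircle, normSq_apply, add_re, add_im, sub_re, sub_im, mul_re, mul_im,
    ofReal_re, ofReal_im, conj_re, conj_im, I_re, I_im]
  ring

theorem circleEqn_pencilCircle_right (z : ℂ) : circleEqn (pencilCircle p q z) q = 0 := by
  rw [circleEqn_eq_ofReal, ofReal_eq_zero]
  simp only [pencilCircle, normSq_apply, add_re, add_im, sub_re, sub_im, mul_re, mul_im,
    ofReal_re, ofReal_im, conj_re, conj_im, I_re, I_im]
  ring

theorem circleForm_pencilCircle (hpq : p ≠ q) (z : ℂ) :
    circleForm (pencilCircle p q z) = normSq z := by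
  have hd : ‖p - q‖ ≠ 0 := by simpa [sub_eq_zero] using hpq
  simp only [circleForm, pencilCircle, normSq_apply, add_re, add_im, sub_re, sub_im, mul_re,
    mul_im, ofReal_re, ofReal_im, conj_re, conj_im, I_re, I_im]
  field_simp
  linear_combination (-(z.re * z.re + z.im * z.im)) * sq_norm_sub_eq p q

theorem pencilCoord_pencilCircle (hpq : p ≠ q) (z : ℂ) :
    pencilCoord p q (pencilCircle p q z) = z := by
  have hd : ‖p - q‖ ≠ 0 := by simpa [sub_eq_zero] using hpq
  apply Complex.ext <;>
    simp only [pencilCoord, pencilCircle, add_re, add_im, sub_re, sub_im, mul_re, mul_im,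
      ofReal_re, ofReal_im, conj_re, conj_im, I_re, I_im] <;>
    field_simp
  · linear_combination (-z.re) * sq_norm_sub_eq p q
  · linear_combination (-z.im) * sq_norm_sub_eq p q

theorem pencilCircle_pencilCoord (hpq : p ≠ q) {x : ℝ × ℂ × ℝ}
    (hp : circleEqn x p = 0) (hq : circleEqn x q = 0) :
    pencilCircle p q (pencilCoord p q x) = x := by
  have hd : ‖p - q‖ ≠ 0 := by simpa [sub_eq_zero] using hpq
  obtain ⟨A, B, C⟩ := x
  rw [circleEqn_eq_ofReal, ofReal_eq_zero] at hp hq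
  simp only [normSq_apply, mul_re, conj_re, conj_im] at hp hq
  simp only [pencilCircle, pencilCoord, Prod.mk.injEq, add_re, add_im, sub_re, sub_im, mul_re,
    mul_im, ofReal_re, ofReal_im, conj_re, conj_im, I_re, I_im]
  refine ⟨?_, ?_, ?_⟩
  · field_simp
    linear_combination -hp - hq - A * sq_norm_sub_eq p q
  · apply Complex.ext <;>
      simp only [ofReal_div, div_ofReal_re, div_ofReal_im, add_re, add_im, sub_re, sub_im,
        mul_re, mul_im, ofReal_re, ofReal_im, I_re, I_im] <;>
      field_simp
    · linear_combination -q.re * hp - p.re * hq - B.re * sq_norm_sub_eq p q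
    · linear_combination -q.im * hp - p.im * hq - B.im * sq_norm_sub_eq p q
  · field_simp
    linear_combination
      -(q.re ^ 2 + q.im ^ 2) * hp - (p.re ^ 2 + p.im ^ 2) * hq - C * sq_norm_sub_eq p q

theorem isEmbedding_pencilCircle (hpq : p ≠ q) : IsEmbedding (pencilCircle p q) :=
  Function.LeftInverse.isEmbedding (pencilCoord_pencilCircle hpq)
    (by unfold pencilCoord; fun_prop) (by unfold pencilCircle; fun_prop)

theorem circlesThrough_eq_image_pencilCircle (hpq : p ≠ q) :
    circlesThrough p q = pencilCircle p q '' {z | ‖z‖ = 1} := by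
  ext x
  constructor
  · rintro ⟨hx, hp, hq⟩
    have hxz := pencilCircle_pencilCoord hpq hp hq
    refine ⟨pencilCoord p q x, ?_, hxz⟩
    have hnormSq := circleForm_pencilCircle hpq (pencilCoord p q x)
    rw [hxz, hx] at hnormSq
    rw [mem_ofPred_eq, norm_def, ← hnormSq, Real.sqrt_one]
  · rintro ⟨z, hz, rfl⟩
    refine ⟨?_, circleEqn_pencilCircle_left z, circleEqn_pencilCircle_right z⟩
    rw [circleForm_pencilCircle hpq, ← Complex.sq_norm, mem_ofPred_eq.mp hz, one_pow]

end Pencil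

/-- For distinct `p, q ∈ ℂ`, the set of oriented circles through both `p`
and `q`, that is `𝔠_{p,q} = {(A,B,C) : |B|² − AC = 1` and the circle equation holds at
`p` and at `q}`, is homeomorphic to the circle `S¹` (a closed space-like geodesic). -/
theorem spacelike_geodesic_homeo_circle (p q : ℂ) (hpq : p ≠ q) :
    Nonempty
      (↥{x : ℝ × ℂ × ℝ |
          Complex.normSq x.2.1 - x.1 * x.2.2 = 1 ∧
          (x.1 : ℂ) * (Complex.normSq p : ℝ) - x.2.1 * (starRingEnd ℂ) p
            - (starRingEnd ℂ) x.2.1 * p + (x.2.2 : ℂ) = 0 ∧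
          (x.1 : ℂ) * (Complex.normSq q : ℝ) - x.2.1 * (starRingEnd ℂ) q
            - (starRingEnd ℂ) x.2.1 * q + (x.2.2 : ℂ) = 0}
        ≃ₜ ↥{z : ℂ | ‖z‖ = 1}) :=
  ⟨(Homeomorph.setCongr (circlesThrough_eq_image_pencilCircle hpq)).trans
    ((isEmbedding_pencilCircle hpq).homeomorphImage _).symm⟩
end

section
/- Let n ≥ 1 and let G, G' : ℝⁿ → ℝⁿ be maps each of whose components is a quadratic form (a homogeneous polynomial of degree 2) on ℝⁿ. Suppose f : ℝⁿ → ℝ is a function such that G(y) − G'(y) = f(y)·y for all y ∈ ℝⁿ. Then there exists a linear form l : ℝⁿ → ℝ with G(y) − G'(y) = l(y)·y for all y ∈ ℝⁿ, and f(y) = l(y) for all y ≠ 0. -/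
/-! A quadratic map `Φ : V → V` with `Φ y = f y • y` forces `f`, once normalised by `f 0 = 0`, to
be linear. Homogeneity comes from `Φ (t • y) = t² • Φ y`. For independent `x, y`, comparing the
coefficients of `x` and `y` in the parallelogram law `Φ (x + y) + Φ (x - y) = 2 Φ x + 2 Φ y` gives
`f (x + y) + f (x - y) = 2 f x` and `f (x + y) - f (x - y) = 2 f y`, hence additivity; for dependent
`x, y` additivity reduces to homogeneity. -/

namespace QuadraticMap

section Parallelogram

variable {R M N : Type*} [CommRing R] [AddCommGroup M] [Module R M] [AddCommGroup N] [Module R N]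

theorem map_add_add_map_sub (Q : QuadraticMap R M N) (x y : M) :
    Q (x + y) + Q (x - y) = 2 • Q x + 2 • Q y := by
  have hsub : polar Q x (-y) = -polar Q x y := polar_neg_right Q x y
  simp only [polar, QuadraticMap.map_neg, ← sub_eq_add_neg] at hsub
  rw [two_nsmul, two_nsmul]
  linear_combination (norm := abel) hsub

end Parallelogram

section Components

variable {ι R M N : Type*} [CommSemiring R] [AddCommMonoid M] [Module R M]
  [AddCommMonoid N] [Module R N]

def ofComponents (Q : ι → QuadraticMap R M N) : QuadraticMap R M (ι → N) where
  toFun x i := Q i x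
  toFun_smul a x := funext fun i => (Q i).map_smul a x
  exists_companion' := by
    choose B hB using fun i => (Q i).exists_companion
    exact ⟨LinearMap.mk₂ R (fun x y i => B i x y) (by intros; ext; simp) (by intros; ext; simp)
      (by intros; ext; simp) (by intros; ext; simp), fun x y => funext fun i => hB i x y⟩

@[simp]
theorem ofComponents_apply (Q : ι → QuadraticMap R M N) (x : M) (i : ι) :
    ofComponents Q x i = Q i x :=
  rfl

end Components

section EulerMultiple

variable {K V : Type*} [Field K] [AddCommGroup V] [Module K V] {Q : QuadraticMap K V V} {f : V → K}

theorem apply_smul_of_map_eq_smul_self (hf : ∀ y, Q y = f y • y) (hf0 : f 0 = 0) (t : K) (y : V) :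
    f (t • y) = t * f y := by
  rcases eq_or_ne t 0 with rfl | ht
  · simp [hf0]
  rcases eq_or_ne y 0 with rfl | hy
  · simp [hf0]
  have h := Q.map_smul t y
  rw [hf, hf, smul_smul, smul_smul] at h
  exact mul_left_cancel₀ ht (by linear_combination smul_left_injective K hy h)

theorem apply_add_of_map_eq_smul_self [NeZero (2 : K)] (hf : ∀ y, Q y = f y • y) (hf0 : f 0 = 0)
    (x y : V) : f (x + y) = f x + f y := by
  rcases eq_or_ne x 0 with rfl | hx
  · simp [hf0]
  by_cases hxy : LinearIndependent K ![x, y]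
  · -- the parallelogram law, read off in the basis `x, y` of their span
    have h := Q.map_add_add_map_sub x y
    simp only [hf] at h
    have hcoef := LinearIndependent.pair_iff.mp hxy
      (f (x + y) + f (x - y) - 2 * f x) (f (x + y) - f (x - y) - 2 * f y)
      (by linear_combination (norm := module) h)
    refine mul_left_cancel₀ (two_ne_zero (α := K)) ?_
    linear_combination hcoef.1 + hcoef.2
  · obtain ⟨t, rfl⟩ : ∃ t : K, t • x = y := by
      simpa [LinearIndependent.pair_iff' hx] using hxy
    rw [show x + t • x = (1 + t) • x by module, apply_smul_of_map_eq_smul_self hf hf0,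
      apply_smul_of_map_eq_smul_self hf hf0]
    ring

theorem exists_linearMap_map_eq_smul_self [NeZero (2 : K)] (hf : ∀ y, Q y = f y • y) :
    ∃ l : V →ₗ[K] K, (∀ y, Q y = l y • y) ∧ ∀ y ≠ 0, f y = l y := by
  classical
  -- the value `f 0` is arbitrary, so normalise it to `0` first
  set g := Function.update f 0 0
  have hg : ∀ y, Q y = g y • y := by
    intro y
    rcases eq_or_ne y 0 with rfl | hy
    · simp
    · simp [g, hy, hf]
  have hg0 : g 0 = 0 := by simp [g]
  refine ⟨⟨⟨g, apply_add_of_map_eq_smul_self hg hg0⟩, apply_smul_of_map_eq_smul_self hg hg0⟩,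
    hg, fun y hy => ?_⟩
  simp [g, hy]

end EulerMultiple

end QuadraticMap

theorem quadratic_difference_multiple_of_euler_general
    (n : ℕ)
    (G G' : (Fin n → ℝ) → Fin n → ℝ)
    (hG : ∀ i : Fin n, ∃ Q : QuadraticForm ℝ (Fin n → ℝ), ∀ y, G y i = Q y)
    (hG' : ∀ i : Fin n, ∃ Q : QuadraticForm ℝ (Fin n → ℝ), ∀ y, G' y i = Q y)
    (f : (Fin n → ℝ) → ℝ)
    (hf : ∀ y : Fin n → ℝ, G y - G' y = f y • y) :
    ∃ l : (Fin n → ℝ) →ₗ[ℝ] ℝ,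
      (∀ y : Fin n → ℝ, G y - G' y = l y • y) ∧
      ∀ y : Fin n → ℝ, y ≠ 0 → f y = l y := by
  choose Q hQ using hG
  choose Q' hQ' using hG'
  have hdiff : ∀ y, QuadraticMap.ofComponents (Q - Q') y = G y - G' y := fun y =>
    funext fun i => by simp [hQ, hQ']
  simp only [← hdiff] at hf ⊢
  exact QuadraticMap.exists_linearMap_map_eq_smul_self hf

/-- If `G, G' : ℝⁿ → ℝⁿ` have components that are quadratic forms on ℝⁿ and
`G(y) − G'(y) = f(y)·y` for some function `f`, then there is a linear form `l` with
`G(y) − G'(y) = l(y)·y` for all `y`, and `f(y) = l(y)` for all `y ≠ 0`. -/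
theorem quadratic_difference_multiple_of_euler
    (n : ℕ) (hn : 1 ≤ n)
    (G G' : (Fin n → ℝ) → Fin n → ℝ)
    (hG : ∀ i : Fin n, ∃ Q : QuadraticForm ℝ (Fin n → ℝ), ∀ y, G y i = Q y)
    (hG' : ∀ i : Fin n, ∃ Q : QuadraticForm ℝ (Fin n → ℝ), ∀ y, G' y i = Q y)
    (f : (Fin n → ℝ) → ℝ)
    (hf : ∀ y : Fin n → ℝ, G y - G' y = f y • y) :
    ∃ l : (Fin n → ℝ) →ₗ[ℝ] ℝ,
      (∀ y : Fin n → ℝ, G y - G' y = l y • y) ∧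
      ∀ y : Fin n → ℝ, y ≠ 0 → f y = l y :=
  quadratic_difference_multiple_of_euler_general n G G' hG hG' f hf
end
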